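/- arXiv:math/0505069 — 6 statements merged into one kernel-verified Lean document; each statement's English description precedes it below -/
import Mathlib

section
/- Let G be a locally compact, second countable Hausdorff topological group, H ≤ G a closed subgroup, Q ≤ H a closed subgroup, and n ≥ 1. Let ι : H⧸Q → G⧸Q be the map sending hQ to hQ and p : G⧸Q → G⧸H the canonical projection. Then the map q_n : G × (H⧸Q)^n → (G⧸Q)^n defined by q_n(g, x₁, …, x_n) = (g·ι(x₁), …, g·ι(x_n)) is continuous, its image is exactly the fibered product F_n := {(y₁, …, y_n) ∈ (G⧸Q)^n : p(y₁) = ⋯ = p(y_n)}, it is constant on the orbits of the right H-action on G × (H⧸Q)^n given by (g, x₁, …, x_n)·h := (gh, h⁻¹·x₁, …, h⁻¹·x_n), and the induced map from the orbit space (G × (H⧸Q)^n)/H (with the quotient topology) onto F_n (with the subspace topology from (G⧸Q)^n) is a homeomorphism; this homeomorphism is equivariant for the G-action by left translation on the first factor of G × (H⧸Q)^n and the diagonal G-action on F_n. -/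
/-!
Write `yᵢ = gᵢQ`. Since `p(g • ι x) = gH`, the tuple `(yᵢ)` lies in `Fₙ` iff all `gᵢ⁻¹gⱼ` lie in
`H`, and then `(g_{i₀}, (g_{i₀}⁻¹gᵢ Q)ᵢ)` is a preimage under `qₙ` depending continuously on
`(gᵢ)`. As `Gⁿ → (G⧸Q)ⁿ` is an open quotient map, so is its restriction over `Fₙ`, and these
continuous lifts make `qₙ` a quotient map onto its image. Two points have the same image iff they
lie in one `H`-orbit (apply `p` to get `g⁻¹g' ∈ H`, then use that `ι` is injective and
`H`-equivariant), so the first isomorphism theorem for such strict maps gives the homeomorphism.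
-/

open Function Set Topology

theorem Topology.IsStrictMap.of_continuous_lift {X Y Z : Type*} [TopologicalSpace X]
    [TopologicalSpace Y] [TopologicalSpace Z] {f : X → Y} {π : Z → Y} (hf : Continuous f)
    (hπ : IsOpenQuotientMap π) (σ : π ⁻¹' range f → X) (hσ : Continuous σ)
    (hfσ : ∀ z, f (σ z) = π z) : IsStrictMap f := by
  have hcomp : rangeFactorization f ∘ σ = (range f).restrictPreimage π :=
    funext fun z => Subtype.ext (hfσ z)
  exact IsQuotientMap.of_comp hσ hf.rangeFactorization
    (hcomp ▸ (hπ.restrictPreimage _).isQuotientMap)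

section CosetTuple

variable {G : Type*} [Group G]

def cosetInclusion (H Q : Subgroup G) : H ⧸ Q.subgroupOf H → G ⧸ Q :=
  Quotient.map' Subtype.val fun _ _ => by
    simp [QuotientGroup.leftRel_apply, Subgroup.mem_subgroupOf]

def cosetTuple (H Q : Subgroup G) (κ : Type*) (a : G × (κ → H ⧸ Q.subgroupOf H)) :
    κ → G ⧸ Q :=
  fun i => a.1 • cosetInclusion H Q (a.2 i)

def cosetFiberedProduct {H Q : Subgroup G} (hQH : Q ≤ H) (κ : Type*) : Set (κ → G ⧸ Q) :=
  {y | ∀ i j, Subgroup.quotientMapOfLE hQH (y i) = Subgroup.quotientMapOfLE hQH (y j)}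

variable {H Q : Subgroup G} {κ : Type*}

theorem cosetInclusion_injective : Injective (cosetInclusion H Q) := by
  rintro ⟨x⟩ ⟨y⟩ hxy
  exact QuotientGroup.eq.2 (Subgroup.mem_subgroupOf.2 (QuotientGroup.eq.1 hxy))

theorem cosetInclusion_smul (h : H) (x : H ⧸ Q.subgroupOf H) :
    cosetInclusion H Q (h • x) = (h : G) • cosetInclusion H Q x := by
  induction x using QuotientGroup.induction_on
  rfl

theorem quotientMapOfLE_cosetTuple (hQH : Q ≤ H)
    (a : G × (κ → H ⧸ Q.subgroupOf H)) (i : κ) :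
    Subgroup.quotientMapOfLE hQH (cosetTuple H Q κ a i) = (a.1 : G ⧸ H) := by
  obtain ⟨h, hh⟩ := QuotientGroup.mk_surjective (a.2 i)
  rw [cosetTuple, ← hh]
  exact QuotientGroup.mk_mul_of_mem a.1 h.2

theorem cosetTuple_mul_fst (g₀ : G) (a : G × (κ → H ⧸ Q.subgroupOf H)) :
    cosetTuple H Q κ (g₀ * a.1, a.2) = g₀ • cosetTuple H Q κ a :=
  funext fun _ => mul_smul _ _ _

theorem cosetTuple_eq_cosetTuple_iff (hQH : Q ≤ H) [Nonempty κ]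
    (a b : G × (κ → H ⧸ Q.subgroupOf H)) :
    cosetTuple H Q κ a = cosetTuple H Q κ b ↔
      ∃ h : H, b.1 = a.1 * (h : G) ∧ ∀ i, b.2 i = h⁻¹ • a.2 i := by
  constructor
  · intro hab
    obtain ⟨i₀⟩ := ‹Nonempty κ›
    have hH : a.1⁻¹ * b.1 ∈ H := by
      have := congrArg (Subgroup.quotientMapOfLE hQH) (congrFun hab i₀)
      rwa [quotientMapOfLE_cosetTuple, quotientMapOfLE_cosetTuple, QuotientGroup.eq] at this
    refine ⟨⟨_, hH⟩, by simp, fun i => cosetInclusion_injective ?_⟩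
    calc cosetInclusion H Q (b.2 i) = b.1⁻¹ • cosetTuple H Q κ a i := by
          rw [hab, cosetTuple, inv_smul_smul]
      _ = _ := by simp [cosetTuple, cosetInclusion_smul, mul_smul]
  · rintro ⟨h, hb₁, hb₂⟩
    funext i
    simp [cosetTuple, hb₁, hb₂, cosetInclusion_smul, mul_smul]

theorem cosetTuple_inv_mul (w : κ → G) (i₀ : κ) (hw : ∀ i, (w i₀)⁻¹ * w i ∈ H) :
    cosetTuple H Q κ (w i₀, fun i => ((⟨_, hw i⟩ : H) : H ⧸ Q.subgroupOf H)) =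
      fun i => (w i : G ⧸ Q) :=
  funext fun i => congrArg _ (mul_inv_cancel_left (w i₀) (w i))

theorem mk_mem_cosetFiberedProduct_iff (hQH : Q ≤ H) (w : κ → G) :
    (fun i => (w i : G ⧸ Q)) ∈ cosetFiberedProduct hQH κ ↔ ∀ i j, (w i)⁻¹ * w j ∈ H := by
  simp only [cosetFiberedProduct, mem_ofPred_eq, Subgroup.quotientMapOfLE_apply_mk, QuotientGroup.eq]

theorem range_cosetTuple (hQH : Q ≤ H) [Nonempty κ] :
    range (cosetTuple H Q κ) = cosetFiberedProduct hQH κ := by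
  refine Subset.antisymm ?_ fun y hy => ?_
  · rintro _ ⟨a, rfl⟩ i j
    rw [quotientMapOfLE_cosetTuple, quotientMapOfLE_cosetTuple]
  · obtain ⟨w, rfl⟩ := QuotientGroup.mk_surjective.comp_left y
    obtain ⟨i₀⟩ := ‹Nonempty κ›
    exact ⟨_, cosetTuple_inv_mul w i₀ ((mk_mem_cosetFiberedProduct_iff hQH w).1 hy i₀)⟩

variable [TopologicalSpace G]

@[fun_prop]
theorem continuous_cosetInclusion : Continuous (cosetInclusion H Q) :=
  (QuotientGroup.isQuotientMap_mk _).continuous_iff.2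
    (QuotientGroup.continuous_mk.comp continuous_subtype_val)

theorem continuous_cosetTuple [IsTopologicalGroup G] : Continuous (cosetTuple H Q κ) := by
  unfold cosetTuple
  fun_prop

theorem isStrictMap_cosetTuple [IsTopologicalGroup G] (hQH : Q ≤ H) [Nonempty κ] :
    IsStrictMap (cosetTuple H Q κ) := by
  have hrange := range_cosetTuple (κ := κ) hQH
  obtain ⟨i₀⟩ := ‹Nonempty κ›
  let E := Pi.map (fun (_ : κ) => ((↑) : G → G ⧸ Q)) ⁻¹' range (cosetTuple H Q κ)
  have hH (w : E) (i : κ) : (w.1 i₀)⁻¹ * w.1 i ∈ H :=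
    (mk_mem_cosetFiberedProduct_iff hQH w.1).1 (hrange.subset w.2) i₀ i
  have hw (i : κ) : Continuous fun w : E => w.1 i :=
    (continuous_apply i).comp continuous_subtype_val
  exact .of_continuous_lift continuous_cosetTuple
    (.piMap fun _ => QuotientGroup.isOpenQuotientMap_mk)
    (fun w : E => (w.1 i₀, fun i => ((⟨_, hH w i⟩ : H) : H ⧸ Q.subgroupOf H)))
    ((hw i₀).prodMk (continuous_pi fun i =>
      QuotientGroup.continuous_mk.comp (((hw i₀).inv.mul (hw i)).subtype_mk _)))
    fun w => cosetTuple_inv_mul w.1 i₀ (hH w)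

end CosetTuple

theorem stmt_0_general
    {G : Type*} [Group G] [TopologicalSpace G] [IsTopologicalGroup G]
    (H Q : Subgroup G) (hQH : Q ≤ H)
    (n : ℕ) (hn : 1 ≤ n)
    (ι : (H ⧸ Q.subgroupOf H) → G ⧸ Q)
    (hι : ∀ h : H, ι (QuotientGroup.mk h) = QuotientGroup.mk (h : G))
    (p : G ⧸ Q → G ⧸ H)
    (hp : ∀ g : G, p (QuotientGroup.mk g) = QuotientGroup.mk g)
    (qn : G × (Fin n → H ⧸ Q.subgroupOf H) → (Fin n → G ⧸ Q))
    (hqn : ∀ (g : G) (x : Fin n → H ⧸ Q.subgroupOf H) (i : Fin n),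
      qn (g, x) i = g • ι (x i))
    (Fn : Set (Fin n → G ⧸ Q))
    (hFn : Fn = {y | ∀ i j : Fin n, p (y i) = p (y j)})
    -- the orbit equivalence relation of the right `H`-action
    -- `(g, x₁, …, xₙ)·h = (gh, h⁻¹·x₁, …, h⁻¹·xₙ)`
    (s : Setoid (G × (Fin n → H ⧸ Q.subgroupOf H)))
    (hs : ∀ a b : G × (Fin n → H ⧸ Q.subgroupOf H),
      s.r a b ↔ ∃ h : H, b.1 = a.1 * (h : G) ∧ ∀ i, b.2 i = h⁻¹ • a.2 i) :
    Continuous qn ∧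
    Set.range qn = Fn ∧
    (∀ a b : G × (Fin n → H ⧸ Q.subgroupOf H), s.r a b → qn a = qn b) ∧
    ∃ e : Quotient s ≃ₜ Fn,
      (∀ a : G × (Fin n → H ⧸ Q.subgroupOf H),
        (e (Quotient.mk s a) : Fin n → G ⧸ Q) = qn a) ∧
      (∀ (g₀ : G) (a : G × (Fin n → H ⧸ Q.subgroupOf H)),
        (e (Quotient.mk s (g₀ * a.1, a.2)) : Fin n → G ⧸ Q)
          = fun i => g₀ • (e (Quotient.mk s a) : Fin n → G ⧸ Q) i) := by
  have : Nonempty (Fin n) := ⟨⟨0, hn⟩⟩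
  obtain rfl : ι = cosetInclusion H Q := funext fun x => QuotientGroup.induction_on x hι
  obtain rfl : p = Subgroup.quotientMapOfLE hQH := funext fun y => QuotientGroup.induction_on y hp
  obtain rfl : qn = cosetTuple H Q (Fin n) := funext fun a => funext (hqn a.1 a.2)
  obtain rfl : Fn = cosetFiberedProduct hQH (Fin n) := hFn
  obtain rfl : s = Setoid.ker (cosetTuple H Q (Fin n)) := Setoid.ext fun a b =>
    (hs a b).trans (cosetTuple_eq_cosetTuple_iff hQH a b).symm
  have hrange := range_cosetTuple (κ := Fin n) hQH
  refine ⟨continuous_cosetTuple, hrange, fun _ _ => id,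
    (Homeomorph.quotientKerEquivRange (isStrictMap_cosetTuple hQH)).trans
      (Homeomorph.setCongr hrange), fun _ => rfl, fun g₀ a => cosetTuple_mul_fst g₀ a⟩

/-- Let `G` be a locally compact, second countable Hausdorff topological
group, `H ≤ G` a closed subgroup, `Q ≤ H` a closed subgroup, and `n ≥ 1`.  Let
`ι : H⧸Q → G⧸Q` be the map sending `hQ` to `hQ` and `p : G⧸Q → G⧸H` the canonical
projection.  Then the map `qₙ : G × (H⧸Q)ⁿ → (G⧸Q)ⁿ`, `(g, x₁, …, xₙ) ↦ (g·ι x₁, …, g·ι xₙ)`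
is continuous, its image is exactly the fibered product
`Fₙ = {(y₁, …, yₙ) : p y₁ = ⋯ = p yₙ}`, it is constant on the orbits of the right `H`-action
`(g, x)·h = (gh, h⁻¹·x)`, and the induced map from the orbit space (with the quotient
topology) onto `Fₙ` (with the subspace topology) is a homeomorphism, equivariant for the
`G`-action by left translation on the first factor and the diagonal `G`-action on `Fₙ`. -/
theorem stmt_0
    {G : Type*} [Group G] [TopologicalSpace G] [IsTopologicalGroup G]
    [LocallyCompactSpace G] [SecondCountableTopology G] [T2Space G]
    (H Q : Subgroup G) (hQH : Q ≤ H)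
    (hHclosed : IsClosed (H : Set G)) (hQclosed : IsClosed (Q : Set G))
    (n : ℕ) (hn : 1 ≤ n)
    (ι : (H ⧸ Q.subgroupOf H) → G ⧸ Q)
    (hι : ∀ h : H, ι (QuotientGroup.mk h) = QuotientGroup.mk (h : G))
    (p : G ⧸ Q → G ⧸ H)
    (hp : ∀ g : G, p (QuotientGroup.mk g) = QuotientGroup.mk g)
    (qn : G × (Fin n → H ⧸ Q.subgroupOf H) → (Fin n → G ⧸ Q))
    (hqn : ∀ (g : G) (x : Fin n → H ⧸ Q.subgroupOf H) (i : Fin n),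
      qn (g, x) i = g • ι (x i))
    (Fn : Set (Fin n → G ⧸ Q))
    (hFn : Fn = {y | ∀ i j : Fin n, p (y i) = p (y j)})
    -- the orbit equivalence relation of the right `H`-action
    -- `(g, x₁, …, xₙ)·h = (gh, h⁻¹·x₁, …, h⁻¹·xₙ)`
    (s : Setoid (G × (Fin n → H ⧸ Q.subgroupOf H)))
    (hs : ∀ a b : G × (Fin n → H ⧸ Q.subgroupOf H),
      s.r a b ↔ ∃ h : H, b.1 = a.1 * (h : G) ∧ ∀ i, b.2 i = h⁻¹ • a.2 i) :
    Continuous qn ∧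
    Set.range qn = Fn ∧
    (∀ a b : G × (Fin n → H ⧸ Q.subgroupOf H), s.r a b → qn a = qn b) ∧
    ∃ e : Quotient s ≃ₜ Fn,
      (∀ a : G × (Fin n → H ⧸ Q.subgroupOf H),
        (e (Quotient.mk s a) : Fin n → G ⧸ Q) = qn a) ∧
      (∀ (g₀ : G) (a : G × (Fin n → H ⧸ Q.subgroupOf H)),
        (e (Quotient.mk s (g₀ * a.1, a.2)) : Fin n → G ⧸ Q)
          = fun i => g₀ • (e (Quotient.mk s a) : Fin n → G ⧸ Q) i) :=
  stmt_0_general H Q hQH n hn ι hι p hp qn hqn Fn hFn s hs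
end

section
/- There exists a Borel function β : G → [0,∞) such that: (1) for every compact set K ⊆ G there is a continuous compactly supported function on G that agrees with β on KH = {kh : k ∈ K, h ∈ H}; (2) ∫_H β(gh) dμ_H(h) = 1 for every g ∈ G; and (3) for every ε > 0 there is a neighborhood U of the identity in G such that for every g₀ ∈ U, sup_{g ∈ G} ∫_H |β(g₀gh) − β(gh)| dμ_H(h) < ε. -/
/-!
Fix a compact neighbourhood `W` of `1` and a compact exhaustion `K n` of `G`, and let `n(x)` be
the least `n` with `x ∈ K n * H`; it is constant on each coset `x H`. The kernel
`κ x = 1_{K n(x) * W}(x) / μ_H {h | x h ∈ K n(x) * W}` is Borel, bounded by `μ_H (W ∩ H)⁻¹`,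
integrates to `1` along every coset, and on `C H` (with `C` compact) it vanishes off a compact set.
Smoothing it on the left, `β = u ⋆ κ` with a continuous compactly supported bump `u` of Haar
integral `1`, keeps the coset integrals equal to `1` by Tonelli. As `β (g₀ x) = (u (g₀ ·) ⋆ κ) x`,
both `|β (g₀ x) - β x|` and `∫_H |β (g₀ g h) - β (g h)| dh` are bounded by a multiple of
`‖u (g₀ ·) - u‖₁`, which tends to `0` as `g₀ → 1`: this gives continuity of `β` and (3), and (1)
follows from continuity and the support property by multiplying with a cutoff.
-/

open MeasureTheory Filter Set Topology
open scoped Pointwise ENNReal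

theorem ENNReal.ofReal_le_ofReal_add_ofReal_abs_sub (a b : ℝ) :
    ENNReal.ofReal a ≤ ENNReal.ofReal b + ENNReal.ofReal |a - b| :=
  (ENNReal.ofReal_le_ofReal (by linarith [le_abs_self (a - b)])).trans ENNReal.ofReal_add_le

theorem ENNReal.abs_toReal_sub_le {a b t : ℝ≥0∞} (hb : b ≠ ∞) (ht : t ≠ ∞)
    (hab : a ≤ b + t) (hba : b ≤ a + t) : |a.toReal - b.toReal| ≤ t.toReal := by
  have ha : a ≠ ∞ := ne_top_of_le_ne_top (add_ne_top.2 ⟨hb, ht⟩) hab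
  have h₁ := toReal_mono (add_ne_top.2 ⟨hb, ht⟩) hab
  have h₂ := toReal_mono (add_ne_top.2 ⟨ha, ht⟩) hba
  rw [toReal_add hb ht] at h₁
  rw [toReal_add ha ht] at h₂
  exact abs_sub_le_iff.2 ⟨by linarith, by linarith⟩

theorem exists_continuous_hasCompactSupport_eqOn {X : Type*} [TopologicalSpace X]
    [RegularSpace X] [LocallyCompactSpace X] {f : X → ℝ} (hf : Continuous f) {s D : Set X}
    (hD : IsCompact D) (hfD : ∀ x ∈ s, f x ≠ 0 → x ∈ D) :
    ∃ φ : X → ℝ, Continuous φ ∧ HasCompactSupport φ ∧ EqOn f φ s := by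
  obtain ⟨χ, hχD, -, hχ, -⟩ := exists_continuous_one_zero_of_isCompact hD isClosed_empty
    (disjoint_empty D)
  refine ⟨fun x => f x * χ x, hf.mul χ.continuous, hχ.mul_left, fun x hx => ?_⟩
  by_cases hfx : f x = 0
  · simp [hfx]
  · simp [hχD (hfD x hx hfx)]

theorem exists_continuous_hasCompactSupport_lintegral_eq_one {X : Type*} [TopologicalSpace X]
    [RegularSpace X] [LocallyCompactSpace X] [Nonempty X] [MeasurableSpace X]
    [OpensMeasurableSpace X] (μ : Measure X) [μ.IsOpenPosMeasure] [IsFiniteMeasureOnCompacts μ] :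
    ∃ u : X → ℝ, Continuous u ∧ HasCompactSupport u ∧ ∫⁻ y, ENNReal.ofReal (u y) ∂μ = 1 := by
  obtain ⟨f, hf, hf_nonneg, hf1⟩ := exists_continuous_nonneg_pos (Classical.arbitrary X)
  have hpos : 0 < ∫ y, f y ∂μ :=
    f.continuous.integral_pos_of_hasCompactSupport_nonneg_nonzero hf hf_nonneg hf1
  set u : X → ℝ := fun y => (∫ y, f y ∂μ)⁻¹ * f y
  have hu : Continuous u := continuous_const.mul f.continuous
  refine ⟨u, hu, hf.mul_left, ?_⟩
  rw [← ofReal_integral_eq_lintegral_ofReal (hu.integrable_of_hasCompactSupport hf.mul_left)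
    (Eventually.of_forall fun y => mul_nonneg (inv_nonneg.2 hpos.le) (hf_nonneg y)),
    integral_const_mul, inv_mul_cancel₀ hpos.ne', ENNReal.ofReal_one]

section Translation

variable {G : Type*} [Group G] [TopologicalSpace G] [IsTopologicalGroup G]
  [MeasurableSpace G] [BorelSpace G] {μ : Measure G}

theorem tendsto_lintegral_ofReal_abs_sub_comp_mul_left [LocallyCompactSpace G]
    [FirstCountableTopology G] [IsFiniteMeasureOnCompacts μ] {u : G → ℝ} (hu : Continuous u)
    (hu' : HasCompactSupport u) :
    Tendsto (fun g => ∫⁻ y, ENNReal.ofReal |u (g * y) - u y| ∂μ) (𝓝 1) (𝓝 0) := by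
  obtain ⟨V, hVc, hV⟩ := exists_compact_mem_nhds (1 : G)
  obtain ⟨C, hC⟩ := hu'.exists_bound_of_continuous hu
  set S := V⁻¹ * tsupport u
  have hSc : IsCompact S := hVc.inv.mul hu'
  have hbound : ∀ g ∈ V, ∀ y, ENNReal.ofReal |u (g * y) - u y|
      ≤ S.indicator (fun _ => ENNReal.ofReal (2 * C)) y := by
    intro g hg y
    by_cases hy : y ∈ S
    · rw [indicator_of_mem hy]
      refine ENNReal.ofReal_le_ofReal ((abs_sub _ _).trans ?_)
      linarith [hC (g * y), hC y, Real.norm_eq_abs (u (g * y)), Real.norm_eq_abs (u y)]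
    · have hgy : u (g * y) = 0 := image_eq_zero_of_notMem_tsupport fun h =>
        hy ⟨g⁻¹, inv_mem_inv.2 hg, g * y, h, inv_mul_cancel_left g y⟩
      have hy' : u y = 0 := image_eq_zero_of_notMem_tsupport fun h =>
        hy ⟨1, by simpa using mem_of_mem_nhds hV, y, h, one_mul y⟩
      simp [hgy, hy']
  have hlim := tendsto_lintegral_filter_of_dominated_convergence (μ := μ) (f := 0) _
    (Eventually.of_forall fun g => ENNReal.measurable_ofReal.comp (by fun_prop))
    (eventually_of_mem hV fun g hg => Eventually.of_forall (hbound g hg))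
    ((lintegral_indicator_const_le _ _).trans_lt
      (ENNReal.mul_lt_top ENNReal.ofReal_lt_top hSc.measure_lt_top)).ne
    (Eventually.of_forall fun y => by
      simpa [Function.comp_def] using (ENNReal.continuous_ofReal.comp
        (by fun_prop : Continuous fun g => |u (g * y) - u y|)).tendsto 1)
  simpa using hlim

end Translation

section Convolution

variable {G : Type*} [Group G] [MeasurableSpace G] {μ : Measure G} {f κ : G → ℝ≥0∞}

theorem mlconvolution_le_lintegral_mul {b : ℝ≥0∞} (hb : b ≠ ∞) (hκ : ∀ x, κ x ≤ b) (x : G) :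
    (f ⋆ₘₗ[μ] κ) x ≤ (∫⁻ y, f y ∂μ) * b :=
  (lintegral_mono fun _ => mul_le_mul_right (hκ _) _).trans_eq (lintegral_mul_const' b f hb)

theorem support_mlconvolution_subset :
    Function.support (f ⋆ₘₗ[μ] κ) ⊆ Function.support f * Function.support κ := by
  intro x hx
  obtain ⟨y, hy⟩ : ∃ y, f y * κ (y⁻¹ * x) ≠ 0 := by
    by_contra! h
    exact hx (by simp [mlconvolution_def, h])
  exact ⟨y, left_ne_zero_of_mul hy, y⁻¹ * x, right_ne_zero_of_mul hy, mul_inv_cancel_left y x⟩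

theorem mlconvolution_mul_left [MeasurableMul G] [μ.IsMulLeftInvariant] (g x : G) :
    (f ⋆ₘₗ[μ] κ) (g * x) = ((fun y => f (g * y)) ⋆ₘₗ[μ] κ) x := by
  simp only [mlconvolution_def]
  rw [← lintegral_mul_left_eq_self _ g]
  simp [mul_assoc]

variable [MeasurableMul₂ G] [MeasurableInv G] [SFinite μ] {H : Subgroup G} {μH : Measure H}
  [SFinite μH]

theorem lintegral_mlconvolution_mul_subgroup (hf : Measurable f) (hκ : Measurable κ)
    (hκH : ∀ z, ∫⁻ h : H, κ (z * h) ∂μH = 1) (w : G) :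
    ∫⁻ h : H, (f ⋆ₘₗ[μ] κ) (w * h) ∂μH = ∫⁻ y, f y ∂μ := by
  simp only [mlconvolution_def]
  rw [lintegral_lintegral_swap (by fun_prop)]
  refine lintegral_congr fun y => ?_
  simp_rw [← mul_assoc]
  rw [lintegral_const_mul _ (by fun_prop), hκH, mul_one]

theorem integrable_toReal_mlconvolution_mul_subgroup (hf : Measurable f) (hκ : Measurable κ)
    (hκH : ∀ z, ∫⁻ h : H, κ (z * h) ∂μH = 1) (hf_fin : ∫⁻ y, f y ∂μ ≠ ∞) (w : G) :
    Integrable (fun h : H => ((f ⋆ₘₗ[μ] κ) (w * h)).toReal) μH :=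
  integrable_toReal_of_lintegral_ne_top ((measurable_mlconvolution μ hf hκ).comp
    (by fun_prop)).aemeasurable (by rwa [lintegral_mlconvolution_mul_subgroup hf hκ hκH])

theorem integral_toReal_mlconvolution_mul_subgroup (hf : Measurable f) (hκ : Measurable κ)
    (hκH : ∀ z, ∫⁻ h : H, κ (z * h) ∂μH = 1) (hf_fin : ∫⁻ y, f y ∂μ ≠ ∞) (w : G) :
    ∫ h : H, ((f ⋆ₘₗ[μ] κ) (w * h)).toReal ∂μH = (∫⁻ y, f y ∂μ).toReal := by
  have hm : Measurable fun h : H => (f ⋆ₘₗ[μ] κ) (w * h) :=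
    (measurable_mlconvolution μ hf hκ).comp (by fun_prop)
  have hint := lintegral_mlconvolution_mul_subgroup (μ := μ) hf hκ hκH w
  rw [integral_toReal hm.aemeasurable (ae_lt_top hm (hint ▸ hf_fin)), hint]

end Convolution

section BruhatFunction

variable {G : Type*} [Group G] [MeasurableSpace G] {μ : Measure G} {u : G → ℝ}

theorem lintegral_ofReal_abs_sub_comp_mul_left_ne_top [MeasurableMul G] [μ.IsMulLeftInvariant]
    (hu : Integrable u μ) (g : G) : ∫⁻ y, ENNReal.ofReal |u (g * y) - u y| ∂μ ≠ ∞ :=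
  ((hu.comp_mul_left g).sub hu).abs.lintegral_lt_top.ne

variable [MeasurableMul₂ G] [MeasurableInv G] {κ : G → ℝ≥0∞} {b : ℝ≥0∞}
  {H : Subgroup G} {μH : Measure H} [SFinite μH]

noncomputable def bruhatFunction (μ : Measure G) (u : G → ℝ) (κ : G → ℝ≥0∞) (x : G) : ℝ :=
  (((fun y => ENNReal.ofReal (u y)) ⋆ₘₗ[μ] κ) x).toReal

theorem measurable_bruhatFunction [SFinite μ] (hu : Measurable u) (hκ : Measurable κ) :
    Measurable (bruhatFunction μ u κ) :=
  (measurable_mlconvolution μ hu.ennreal_ofReal hκ).ennreal_toReal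

theorem integral_bruhatFunction_mul [SFinite μ] (hum : Measurable u) (hu : Integrable u μ)
    (hκ : Measurable κ) (hκH : ∀ z, ∫⁻ h : H, κ (z * h) ∂μH = 1) (w : G) :
    ∫ h : H, bruhatFunction μ u κ (w * h) ∂μH = (∫⁻ y, ENNReal.ofReal (u y) ∂μ).toReal :=
  integral_toReal_mlconvolution_mul_subgroup hum.ennreal_ofReal hκ hκH hu.lintegral_lt_top.ne w

theorem abs_bruhatFunction_mul_left_sub_le [μ.IsMulLeftInvariant] (hu : Integrable u μ)
    (hκ : Measurable κ) (hb : b ≠ ∞) (hκb : ∀ x, κ x ≤ b) (g x : G) :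
    |bruhatFunction μ u κ (g * x) - bruhatFunction μ u κ x|
      ≤ (((fun y => ENNReal.ofReal |u (g * y) - u y|) ⋆ₘₗ[μ] κ) x).toReal := by
  have hfin : ∀ v : G → ℝ, Integrable v μ →
      ((fun y => ENNReal.ofReal (v y)) ⋆ₘₗ[μ] κ) x ≠ ∞ := fun v hv =>
    ne_top_of_le_ne_top (ENNReal.mul_ne_top hv.lintegral_lt_top.ne hb)
      (mlconvolution_le_lintegral_mul hb hκb x)
  have hle : ∀ v w : G → ℝ, Integrable w μ →
      ((fun y => ENNReal.ofReal (v y)) ⋆ₘₗ[μ] κ) x ≤ ((fun y => ENNReal.ofReal (w y)) ⋆ₘₗ[μ] κ) x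
        + ((fun y => ENNReal.ofReal |v y - w y|) ⋆ₘₗ[μ] κ) x := by
    intro v w hw
    have hwm := hw.aemeasurable
    calc ∫⁻ y, ENNReal.ofReal (v y) * κ (y⁻¹ * x) ∂μ
        ≤ ∫⁻ y, ENNReal.ofReal (w y) * κ (y⁻¹ * x)
            + ENNReal.ofReal |v y - w y| * κ (y⁻¹ * x) ∂μ := lintegral_mono fun y => by
          rw [← add_mul]
          exact mul_le_mul_left (ENNReal.ofReal_le_ofReal_add_ofReal_abs_sub _ _) _
      _ = _ := lintegral_add_left' (by fun_prop) _
  have hug : Integrable (fun y => u (g * y)) μ := hu.comp_mul_left g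
  rw [bruhatFunction, bruhatFunction, mlconvolution_mul_left]
  refine ENNReal.abs_toReal_sub_le (hfin u hu) (hfin _ (hug.sub hu).abs) (hle _ _ hu) ?_
  simpa only [abs_sub_comm] using hle u _ hug

theorem integral_abs_bruhatFunction_mul_left_sub_le [SFinite μ] [μ.IsMulLeftInvariant]
    (hum : Measurable u) (hu : Integrable u μ) (hκ : Measurable κ) (hb : b ≠ ∞)
    (hκb : ∀ x, κ x ≤ b) (hκH : ∀ z, ∫⁻ h : H, κ (z * h) ∂μH = 1) (g x : G) :
    ∫ h : H, |bruhatFunction μ u κ (g * (x * h)) - bruhatFunction μ u κ (x * h)| ∂μH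
      ≤ (∫⁻ y, ENNReal.ofReal |u (g * y) - u y| ∂μ).toReal := by
  have hD : Measurable fun y => ENNReal.ofReal |u (g * y) - u y| := by fun_prop
  have hD_fin := lintegral_ofReal_abs_sub_comp_mul_left_ne_top hu g
  rw [← integral_toReal_mlconvolution_mul_subgroup hD hκ hκH hD_fin x]
  exact integral_mono_of_nonneg (ae_of_all _ fun _ => abs_nonneg _)
    (integrable_toReal_mlconvolution_mul_subgroup hD hκ hκH hD_fin x)
    (ae_of_all _ fun h => abs_bruhatFunction_mul_left_sub_le hu hκ hb hκb g (x * h))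

end BruhatFunction

section Topology

variable {G : Type*} [Group G] [TopologicalSpace G] [IsTopologicalGroup G] [MeasurableSpace G]
  {μ : Measure G} {u : G → ℝ} {κ : G → ℝ≥0∞}

theorem exists_isCompact_bruhatFunction_ne_zero_mem (hu' : HasCompactSupport u) {H : Subgroup G}
    (hκ : ∀ C : Set G, IsCompact C → ∃ D : Set G, IsCompact D ∧
      ∀ w ∈ C * (H : Set G), κ w ≠ 0 → w ∈ D)
    {K : Set G} (hK : IsCompact K) :
    ∃ D : Set G, IsCompact D ∧ ∀ w ∈ K * (H : Set G), bruhatFunction μ u κ w ≠ 0 → w ∈ D := by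
  obtain ⟨D, hD, hκD⟩ := hκ _ ((IsCompact.inv hu').mul hK)
  refine ⟨tsupport u * D, IsCompact.mul hu' hD, ?_⟩
  rintro _ ⟨k, hk, h, hh, rfl⟩ hw
  have hconv : ((fun y => ENNReal.ofReal (u y)) ⋆ₘₗ[μ] κ) (k * h) ≠ 0 := fun h0 =>
    hw (by simp [bruhatFunction, h0])
  obtain ⟨y, hy, z, hz, hyz⟩ := support_mlconvolution_subset hconv
  have hyu : y ∈ tsupport u := subset_tsupport u fun h0 => hy (by simp [h0])
  refine ⟨y, hyu, z, hκD z ⟨y⁻¹ * k, mul_mem_mul (inv_mem_inv.2 hyu) hk, h, hh, ?_⟩ hz, hyz⟩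
  simp only at hyz ⊢
  rw [mul_assoc, ← hyz, inv_mul_cancel_left]

theorem continuous_bruhatFunction [SecondCountableTopology G] [BorelSpace G]
    [LocallyCompactSpace G] [μ.IsMulLeftInvariant] [IsFiniteMeasureOnCompacts μ]
    (hu : Continuous u) (hu' : HasCompactSupport u)
    (hκ : Measurable κ) {b : ℝ≥0∞} (hb : b ≠ ∞) (hκb : ∀ x, κ x ≤ b) :
    Continuous (bruhatFunction μ u κ) := by
  have hui : Integrable u μ := hu.integrable_of_hasCompactSupport hu'
  refine continuous_iff_continuousAt.2 fun x => ?_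
  rw [ContinuousAt, ← map_mul_right_nhds_one x, tendsto_map'_iff]
  have hbound : Tendsto (fun g => ((∫⁻ y, ENNReal.ofReal |u (g * y) - u y| ∂μ) * b).toReal)
      (𝓝 1) (𝓝 0) := by
    have := ENNReal.Tendsto.mul_const
      (tendsto_lintegral_ofReal_abs_sub_comp_mul_left (μ := μ) hu hu') (.inr hb)
    rw [zero_mul] at this
    simpa only [Function.comp_def, ENNReal.toReal_zero] using
      (ENNReal.tendsto_toReal ENNReal.zero_ne_top).comp this
  refine tendsto_iff_norm_sub_tendsto_zero.2
    (squeeze_zero (fun _ => norm_nonneg _) (fun g => ?_) hbound)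
  exact (abs_bruhatFunction_mul_left_sub_le hui hκ hb hκb g x).trans (ENNReal.toReal_mono
    (ENNReal.mul_ne_top (lintegral_ofReal_abs_sub_comp_mul_left_ne_top hui g) hb)
    (mlconvolution_le_lintegral_mul hb hκb x))

end Topology

section CosetIndex

variable {G : Type*} [Group G] {H : Subgroup G}

theorem mul_mem_mul_subgroup_iff {s : Set G} {x h : G} (hh : h ∈ H) :
    x * h ∈ s * (H : Set G) ↔ x ∈ s * (H : Set G) := by
  simp only [Set.mem_mul]
  constructor
  · rintro ⟨a, ha, b, hb, hab⟩
    exact ⟨a, ha, b * h⁻¹, H.mul_mem hb (H.inv_mem hh), by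
      rw [← mul_assoc, hab, mul_inv_cancel_right]⟩
  · rintro ⟨a, ha, b, hb, rfl⟩
    exact ⟨a, ha, b * h, H.mul_mem hb hh, (mul_assoc _ _ _).symm⟩

variable [TopologicalSpace G]

theorem CompactExhaustion.exists_mem_mul_subgroup (K : CompactExhaustion G) (H : Subgroup G)
    (x : G) : ∃ n, x ∈ K n * (H : Set G) :=
  (K.exists_mem x).imp fun _ hn => ⟨x, hn, 1, H.one_mem, mul_one x⟩

open Classical in
noncomputable def cosetIndex (K : CompactExhaustion G) (H : Subgroup G) (x : G) : ℕ :=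
  Nat.find (K.exists_mem_mul_subgroup H x)

open Classical in
theorem mem_cosetIndex (K : CompactExhaustion G) (x : G) :
    x ∈ K (cosetIndex K H x) * (H : Set G) :=
  Nat.find_spec (K.exists_mem_mul_subgroup H x)

open Classical in
theorem cosetIndex_le {K : CompactExhaustion G} {x : G} {n : ℕ} (hx : x ∈ K n * (H : Set G)) :
    cosetIndex K H x ≤ n :=
  Nat.find_min' _ hx

theorem cosetIndex_mul (K : CompactExhaustion G) (x : G) {h : G} (hh : h ∈ H) :
    cosetIndex K H (x * h) = cosetIndex K H x :=
  le_antisymm (cosetIndex_le ((mul_mem_mul_subgroup_iff hh).2 (mem_cosetIndex K x)))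
    (cosetIndex_le ((mul_mem_mul_subgroup_iff hh).1 (mem_cosetIndex K (x * h))))

end CosetIndex

section Kernel

variable {G : Type*} [Group G] [MeasurableSpace G] {H : Subgroup G} {μH : Measure H}

noncomputable def fiberVolume (μH : Measure H) (S : Set G) (x : G) : ℝ≥0∞ :=
  μH {h : H | x * h ∈ S}

noncomputable def normalizedIndicator (μH : Measure H) (S : Set G) : G → ℝ≥0∞ :=
  S.indicator fun y => (fiberVolume μH S y)⁻¹

variable [TopologicalSpace G] {W : Set G}

noncomputable def bruhatKernel (K : CompactExhaustion G) (W : Set G) (μH : Measure H) (x : G) :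
    ℝ≥0∞ :=
  normalizedIndicator μH (K (cosetIndex K H x) * W) x

theorem measure_setOf_coe_mem_pos [μH.IsOpenPosMeasure] (hW1 : W ∈ 𝓝 1) :
    0 < μH {h : H | (h : G) ∈ W} :=
  Measure.measure_pos_of_mem_nhds μH (x := 1)
    (continuous_subtype_val.continuousAt.preimage_mem_nhds hW1)

variable [IsTopologicalGroup G]

theorem fiberVolume_lt_top [IsFiniteMeasureOnCompacts μH] (hH : IsClosed (H : Set G))
    {S : Set G} (hS : IsCompact S) (x : G) : fiberVolume μH S x < ∞ :=
  (hH.isClosedEmbedding_subtypeVal.isCompact_preimage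
    ((Homeomorph.mulLeft x).isCompact_preimage.2 hS)).measure_lt_top

theorem exists_isCompact_bruhatKernel_ne_zero_mem (K : CompactExhaustion G) (hW : IsCompact W)
    {C : Set G} (hC : IsCompact C) :
    ∃ D : Set G, IsCompact D ∧ ∀ w ∈ C * (H : Set G), bruhatKernel K W μH w ≠ 0 → w ∈ D := by
  obtain ⟨m, hm⟩ := K.exists_superset_of_isCompact hC
  refine ⟨K m * W, (K.isCompact m).mul hW, fun w hw hκ => ?_⟩
  rw [bruhatKernel, normalizedIndicator] at hκ
  exact mul_subset_mul_right (K.subset (cosetIndex_le (mul_subset_mul_right hm hw)))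
    (mem_of_indicator_ne_zero hκ)

variable [BorelSpace G]

theorem fiberVolume_mul_right [μH.IsMulLeftInvariant] (S : Set G) (x : G) (h : H) :
    fiberVolume μH S (x * h) = fiberVolume μH S x := by
  have : {k : H | x * h * k ∈ S} = (fun k => h * k) ⁻¹' {k : H | x * k ∈ S} := by
    ext k
    simp [mul_assoc]
  rw [fiberVolume, fiberVolume, this, measure_preimage_mul]

theorem measurable_fiberVolume [SecondCountableTopology G] [SFinite μH] {S : Set G}
    (hS : MeasurableSet S) : Measurable (fiberVolume μH S) :=
  measurable_measure_prodMk_left (ν := μH)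
    ((measurable_fst.mul (measurable_subtype_coe.comp measurable_snd)) hS)

theorem le_fiberVolume_mul [μH.IsMulLeftInvariant] {E : Set G} {x : G}
    (hx : x ∈ E * (H : Set G)) : μH {h : H | (h : G) ∈ W} ≤ fiberVolume μH (E * W) x := by
  obtain ⟨a, ha, b, hb, rfl⟩ := Set.mem_mul.1 hx
  rw [show a * b = a * ((⟨b, hb⟩ : H) : G) from rfl, fiberVolume_mul_right]
  exact measure_mono fun h hh => mul_mem_mul ha hh

theorem lintegral_normalizedIndicator_mul [μH.IsMulLeftInvariant] {S : Set G}
    (hS : MeasurableSet S) {z : G} (h0 : fiberVolume μH S z ≠ 0) (htop : fiberVolume μH S z ≠ ∞) :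
    ∫⁻ h : H, normalizedIndicator μH S (z * h) ∂μH = 1 := by
  have : ∀ h : H, normalizedIndicator μH S (z * h)
      = {h : H | z * h ∈ S}.indicator (fun _ => (fiberVolume μH S z)⁻¹) h := by
    intro h
    by_cases hzh : z * h ∈ S <;> simp [normalizedIndicator, hzh, fiberVolume_mul_right]
  have hS' : MeasurableSet {h : H | z * h ∈ S} := (by fun_prop : Measurable fun h : H => z * h) hS
  simp_rw [this]
  rw [lintegral_indicator_const hS', ← fiberVolume, ENNReal.inv_mul_cancel h0 htop]

theorem measurable_bruhatKernel [SecondCountableTopology G] [T2Space G] [SFinite μH]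
    (hH : IsClosed (H : Set G)) (K : CompactExhaustion G) (hW : IsCompact W) :
    Measurable (bruhatKernel K W μH) := by
  have hS : ∀ n, MeasurableSet (K n * W) := fun n =>
    ((K.isCompact n).mul hW).isClosed.measurableSet
  classical
  exact Measurable.find (f := fun n => normalizedIndicator μH (K n * W))
    (p := fun n x => x ∈ K n * (H : Set G))
    (fun n => (measurable_fiberVolume (hS n)).inv.indicator (hS n))
    (fun n => (hH.mul_left_of_isCompact (K.isCompact n)).measurableSet)
    (K.exists_mem_mul_subgroup H)

theorem lintegral_bruhatKernel_mul [T2Space G] [μH.IsMulLeftInvariant] [μH.IsOpenPosMeasure]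
    [IsFiniteMeasureOnCompacts μH] (hH : IsClosed (H : Set G)) (K : CompactExhaustion G)
    (hW : IsCompact W) (hW1 : W ∈ 𝓝 1) (z : G) :
    ∫⁻ h : H, bruhatKernel K W μH (z * h) ∂μH = 1 := by
  simp_rw [bruhatKernel, cosetIndex_mul K z (SetLike.coe_mem _)]
  have hS := (K.isCompact (cosetIndex K H z)).mul hW
  exact lintegral_normalizedIndicator_mul hS.isClosed.measurableSet
    ((measure_setOf_coe_mem_pos hW1).trans_le (le_fiberVolume_mul (mem_cosetIndex K z))).ne'
    (fiberVolume_lt_top hH hS z).ne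

theorem bruhatKernel_le [μH.IsMulLeftInvariant] (K : CompactExhaustion G) (x : G) :
    bruhatKernel K W μH x ≤ (μH {h : H | (h : G) ∈ W})⁻¹ := by
  rw [bruhatKernel, normalizedIndicator]
  exact indicator_apply_le'
    (fun _ => ENNReal.inv_le_inv.2 (le_fiberVolume_mul (mem_cosetIndex K x))) fun _ => zero_le

end Kernel

/-- Let `G` be a locally compact, second countable Hausdorff topological
group and `H ≤ G` a closed subgroup, `μ_H` a left Haar measure on `H`.  There exists a
Borel function `β : G → [0,∞)` such that: (1) for every compact `K ⊆ G` there is a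
continuous compactly supported function on `G` agreeing with `β` on `KH`;
(2) `∫_H β(gh) dμ_H(h) = 1` for every `g ∈ G`; and (3) for every `ε > 0` there is a
neighborhood `U` of the identity such that for every `g₀ ∈ U`,
`sup_{g ∈ G} ∫_H |β(g₀gh) − β(gh)| dμ_H(h) < ε`. -/
theorem stmt_3
    {G : Type*} [Group G] [TopologicalSpace G] [IsTopologicalGroup G]
    [LocallyCompactSpace G] [SecondCountableTopology G] [T2Space G]
    [MeasurableSpace G] [BorelSpace G]
    (H : Subgroup G) (hHclosed : IsClosed (H : Set G))
    (μH : Measure H) [μH.IsHaarMeasure] :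
    ∃ β : G → ℝ, Measurable β ∧ (∀ g, 0 ≤ β g) ∧
      (∀ K : Set G, IsCompact K → ∃ φ : G → ℝ, Continuous φ ∧ HasCompactSupport φ ∧
        ∀ g ∈ K * (H : Set G), β g = φ g) ∧
      (∀ g : G, ∫ h : H, β (g * (h : G)) ∂μH = 1) ∧
      (∀ ε : ℝ, 0 < ε → ∃ U ∈ nhds (1 : G), ∀ g₀ ∈ U,
        (⨆ g : G, ∫ h : H, |β (g₀ * g * (h : G)) - β (g * (h : G))| ∂μH) < ε) := by
  have : LocallyCompactSpace H := hHclosed.locallyCompactSpace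
  have : SecondCountableTopology H := TopologicalSpace.Subtype.secondCountableTopology _
  obtain ⟨W, hWc, hW1⟩ := exists_compact_mem_nhds (1 : G)
  set E := CompactExhaustion.choice G
  have hκ : Measurable (bruhatKernel E W μH) := measurable_bruhatKernel hHclosed E hWc
  have hκH := lintegral_bruhatKernel_mul (μH := μH) hHclosed E hWc hW1
  have hb := ENNReal.inv_ne_top.2 (measure_setOf_coe_mem_pos (μH := μH) hW1).ne'
  obtain ⟨u, hu, hu', hu1⟩ := exists_continuous_hasCompactSupport_lintegral_eq_one
    (Measure.haar : Measure G)
  have hui : Integrable u Measure.haar := hu.integrable_of_hasCompactSupport hu'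
  refine ⟨bruhatFunction Measure.haar u (bruhatKernel E W μH),
    measurable_bruhatFunction hu.measurable hκ, fun _ => ENNReal.toReal_nonneg,
    fun C hC => ?_, fun g => ?_, fun ε hε => ?_⟩
  · obtain ⟨D, hD, hβD⟩ := exists_isCompact_bruhatFunction_ne_zero_mem hu'
      (fun C hC => exists_isCompact_bruhatKernel_ne_zero_mem E hWc hC) hC
    exact exists_continuous_hasCompactSupport_eqOn
      (continuous_bruhatFunction hu hu' hκ hb (bruhatKernel_le E)) hD hβD
  · rw [integral_bruhatFunction_mul hu.measurable hui hκ hκH, hu1, ENNReal.toReal_one]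
  · have hlim := (ENNReal.tendsto_toReal ENNReal.zero_ne_top).comp
      (tendsto_lintegral_ofReal_abs_sub_comp_mul_left (μ := Measure.haar) hu hu')
    refine ⟨_, hlim (Iio_mem_nhds hε), fun g₀ hg₀ => (ciSup_le fun g => ?_).trans_lt hg₀⟩
    simpa only [mul_assoc, Function.comp_apply] using integral_abs_bruhatFunction_mul_left_sub_le
      hu.measurable hui hκ hb (bruhatKernel_le E) hκH g₀ g
end

section
/- Let μ_r be a right Haar measure on G, let β₀ : G → [0,∞) be a Borel function with ∫_H β₀(xh) dμ_H(h) = 1 for every x ∈ G, and let f : G → ℝ be continuous, compactly supported, nonnegative, with ∫_G f(x⁻¹) dμ_r(x) = 1. Define β(g) := ∫_G f(gx⁻¹)·β₀(x) dμ_r(x). Then: (a) ∫_H β(gh) dμ_H(h) = 1 for every g ∈ G; and (b) for all g₀, g ∈ G, ∫_H |β(g₀gh) − β(gh)| dμ_H(h) ≤ ∫_G |f(g₀x⁻¹) − f(x⁻¹)| dμ_r(x). -/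
/-!
Since `β₀` has mass one on every coset `xH`, Fubini gives `∫_H ∫_G φ(x) β₀(xh) = ∫_G φ` for every
integrable `φ`, and applying this to `|φ|` shows that `φ ↦ (h ↦ ∫_G φ(x) β₀(xh))` is a contraction
from `L¹(G)` to `L¹(H)`. By right invariance of `μ_r`, `β(gh) = ∫_G f(gx⁻¹) β₀(xh)`, so (a) is the
mass identity for `φ = f(g·⁻¹)` and (b) is the contraction for `φ = f(g₀g·⁻¹) - f(g·⁻¹)`; a last
right translation by `g` removes `g` from both right-hand sides.
-/

open MeasureTheory

section Fiber

variable {G : Type*} [Group G] [MeasurableSpace G] [MeasurableMul₂ G]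
    {H : Subgroup G} {μH : Measure H} [SigmaFinite μH] {μ : Measure G} {β₀ : G → ℝ}

theorem integrable_prod_mul_fiber (hβ₀_meas : Measurable β₀) (hβ₀_nonneg : ∀ g, 0 ≤ β₀ g)
    (hβ₀_int : ∀ x : G, ∫ h : H, β₀ (x * h) ∂μH = 1) {φ : G → ℝ} (hφ : Integrable φ μ) :
    Integrable (fun p : G × H => φ p.1 * β₀ (p.1 * p.2)) (μ.prod μH) := by
  have hmeas : AEStronglyMeasurable (fun p : G × H => φ p.1 * β₀ (p.1 * p.2)) (μ.prod μH) :=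
    hφ.aestronglyMeasurable.comp_fst.mul <| Measurable.aestronglyMeasurable <|
      hβ₀_meas.comp (measurable_fst.mul (measurable_subtype_coe.comp measurable_snd))
  have hfiber (x : G) : Integrable (fun h : H => β₀ (x * h)) μH :=
    Integrable.of_integral_ne_zero (by simp [hβ₀_int x])
  have hnorm (x : G) : ∫ h : H, ‖φ x * β₀ (x * h)‖ ∂μH = ‖φ x‖ := by
    simp_rw [norm_mul, Real.norm_of_nonneg (hβ₀_nonneg _)]
    rw [integral_const_mul, hβ₀_int, mul_one]
  refine (integrable_prod_iff hmeas).2 ⟨ae_of_all _ fun x => (hfiber x).const_mul (φ x), ?_⟩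
  simpa only [hnorm] using hφ.norm

theorem integral_integral_mul_fiber [SFinite μ] (hβ₀_meas : Measurable β₀)
    (hβ₀_nonneg : ∀ g, 0 ≤ β₀ g) (hβ₀_int : ∀ x : G, ∫ h : H, β₀ (x * h) ∂μH = 1)
    {φ : G → ℝ} (hφ : Integrable φ μ) :
    ∫ h : H, ∫ x, φ x * β₀ (x * h) ∂μ ∂μH = ∫ x, φ x ∂μ := by
  rw [← integral_integral_swap (integrable_prod_mul_fiber hβ₀_meas hβ₀_nonneg hβ₀_int hφ)]
  simp_rw [integral_const_mul, hβ₀_int, mul_one]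

theorem integral_abs_integral_mul_fiber_le [SFinite μ] (hβ₀_meas : Measurable β₀)
    (hβ₀_nonneg : ∀ g, 0 ≤ β₀ g) (hβ₀_int : ∀ x : G, ∫ h : H, β₀ (x * h) ∂μH = 1)
    {φ : G → ℝ} (hφ : Integrable φ μ) :
    ∫ h : H, |∫ x, φ x * β₀ (x * h) ∂μ| ∂μH ≤ ∫ x, |φ x| ∂μ := by
  have hbound (h : H) : |∫ x, φ x * β₀ (x * h) ∂μ| ≤ ∫ x, |φ x| * β₀ (x * h) ∂μ := by
    simpa only [Real.norm_eq_abs, abs_mul, abs_of_nonneg (hβ₀_nonneg _)] using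
      norm_integral_le_integral_norm (fun x => φ x * β₀ (x * h))
  calc ∫ h : H, |∫ x, φ x * β₀ (x * h) ∂μ| ∂μH
      ≤ ∫ h : H, ∫ x, |φ x| * β₀ (x * h) ∂μ ∂μH :=
        integral_mono_of_nonneg (ae_of_all _ fun _ => abs_nonneg _)
          (integrable_prod_mul_fiber hβ₀_meas hβ₀_nonneg hβ₀_int hφ.abs).integral_prod_right
          (ae_of_all _ hbound)
    _ = ∫ x, |φ x| ∂μ := integral_integral_mul_fiber hβ₀_meas hβ₀_nonneg hβ₀_int hφ.abs

theorem integral_abs_sub_integral_mul_fiber_le [SFinite μ] (hβ₀_meas : Measurable β₀)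
    (hβ₀_nonneg : ∀ g, 0 ≤ β₀ g) (hβ₀_int : ∀ x : G, ∫ h : H, β₀ (x * h) ∂μH = 1)
    {φ ψ : G → ℝ} (hφ : Integrable φ μ) (hψ : Integrable ψ μ) :
    ∫ h : H, |∫ x, φ x * β₀ (x * h) ∂μ - ∫ x, ψ x * β₀ (x * h) ∂μ| ∂μH
      ≤ ∫ x, |φ x - ψ x| ∂μ := by
  have hsub : ∀ᵐ h : H ∂μH, ∫ x, φ x * β₀ (x * h) ∂μ - ∫ x, ψ x * β₀ (x * h) ∂μ
      = ∫ x, (φ x - ψ x) * β₀ (x * h) ∂μ := by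
    filter_upwards [(integrable_prod_mul_fiber hβ₀_meas hβ₀_nonneg hβ₀_int hφ).prod_left_ae,
      (integrable_prod_mul_fiber hβ₀_meas hβ₀_nonneg hβ₀_int hψ).prod_left_ae] with h hφh hψh
    rw [← integral_sub hφh hψh]
    simp_rw [sub_mul]
  rw [integral_congr_ae (hsub.mono fun h hh => congrArg abs hh)]
  exact integral_abs_integral_mul_fiber_le hβ₀_meas hβ₀_nonneg hβ₀_int (hφ.sub hψ)

end Fiber

section RightInvariant

variable {G : Type*} [Group G] [MeasurableSpace G] [MeasurableMul G]
    {μ : Measure G} [μ.IsMulRightInvariant]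

theorem integral_mul_inv_eq_integral_inv (Φ : G → ℝ) (g : G) :
    ∫ x, Φ (g * x⁻¹) ∂μ = ∫ x, Φ x⁻¹ ∂μ := by
  rw [← integral_mul_right_eq_self (fun x => Φ (g * x⁻¹)) g]
  simp [mul_inv_rev]

theorem integral_mul_inv_mul_eq (Φ ψ : G → ℝ) (g c : G) :
    ∫ x, Φ (g * c * x⁻¹) * ψ x ∂μ = ∫ x, Φ (g * x⁻¹) * ψ (x * c) ∂μ := by
  rw [← integral_mul_right_eq_self (fun x => Φ (g * c * x⁻¹) * ψ x) c]
  simp [mul_inv_rev, mul_assoc]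

end RightInvariant

theorem Continuous.integrable_comp_mul_inv {G : Type*} [Group G] [TopologicalSpace G]
    [IsTopologicalGroup G] [MeasurableSpace G] [OpensMeasurableSpace G] {μ : Measure G}
    [IsFiniteMeasureOnCompacts μ] {f : G → ℝ} (hf : Continuous f) (hf_supp : HasCompactSupport f)
    (g : G) : Integrable (fun x => f (g * x⁻¹)) μ :=
  (hf.comp (continuous_const.mul continuous_inv)).integrable_of_hasCompactSupport
    (hf_supp.comp_homeomorph ((Homeomorph.inv G).trans (Homeomorph.mulLeft g)))

theorem stmt_4_general
    {G : Type*} [Group G] [TopologicalSpace G] [IsTopologicalGroup G]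
    [LocallyCompactSpace G] [SecondCountableTopology G]
    [MeasurableSpace G] [BorelSpace G]
    (H : Subgroup G) (hHclosed : IsClosed (H : Set G))
    (μH : Measure H) [μH.IsHaarMeasure]
    (μr : Measure G) [IsFiniteMeasureOnCompacts μr] [μr.IsMulRightInvariant]
    (β₀ : G → ℝ) (hβ₀_meas : Measurable β₀) (hβ₀_nonneg : ∀ g, 0 ≤ β₀ g)
    (hβ₀_int : ∀ x : G, ∫ h : H, β₀ (x * (h : G)) ∂μH = 1)
    (f : G → ℝ) (hf_cont : Continuous f) (hf_supp : HasCompactSupport f)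
    (hf_int : ∫ x, f x⁻¹ ∂μr = 1)
    (β : G → ℝ) (hβ : ∀ g : G, β g = ∫ x, f (g * x⁻¹) * β₀ x ∂μr) :
    (∀ g : G, ∫ h : H, β (g * (h : G)) ∂μH = 1) ∧
    (∀ g₀ g : G, ∫ h : H, |β (g₀ * g * (h : G)) - β (g * (h : G))| ∂μH
      ≤ ∫ x, |f (g₀ * x⁻¹) - f x⁻¹| ∂μr) := by
  have : LocallyCompactSpace H := hHclosed.locallyCompactSpace
  have : SecondCountableTopology H :=
    inferInstanceAs (SecondCountableTopology ((H : Set G) : Type _))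
  have : SigmaFinite μH := sigmaFinite_of_locallyFinite
  have hβ_coset (g : G) (h : H) : β (g * h) = ∫ x, f (g * x⁻¹) * β₀ (x * h) ∂μr := by
    rw [hβ, integral_mul_inv_mul_eq]
  have hf_integrable := hf_cont.integrable_comp_mul_inv hf_supp (μ := μr)
  refine ⟨fun g => ?_, fun g₀ g => ?_⟩
  · simp_rw [hβ_coset, integral_integral_mul_fiber hβ₀_meas hβ₀_nonneg hβ₀_int (hf_integrable g),
      integral_mul_inv_eq_integral_inv f g, hf_int]
  · simp_rw [hβ_coset]
    calc _ ≤ ∫ x, |f (g₀ * g * x⁻¹) - f (g * x⁻¹)| ∂μr :=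
          integral_abs_sub_integral_mul_fiber_le hβ₀_meas hβ₀_nonneg hβ₀_int
            (hf_integrable (g₀ * g)) (hf_integrable g)
      _ = ∫ x, |f (g₀ * x⁻¹) - f x⁻¹| ∂μr := by
          simpa only [mul_assoc] using
            integral_mul_inv_eq_integral_inv (fun y => |f (g₀ * y) - f y|) g (μ := μr)

/-- Let `G` be a locally compact, second countable Hausdorff topological
group, `H ≤ G` a closed subgroup, `μ_H` a left Haar measure on `H`, `μ_r` a right Haar
measure on `G`.  Let `β₀ : G → [0,∞)` be Borel with `∫_H β₀(xh) dμ_H(h) = 1` for every `x`,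
and `f : G → ℝ` continuous, compactly supported, nonnegative, with `∫_G f(x⁻¹) dμ_r(x) = 1`.
Define `β(g) := ∫_G f(gx⁻¹)·β₀(x) dμ_r(x)`.  Then (a) `∫_H β(gh) dμ_H(h) = 1` for every
`g ∈ G`; and (b) for all `g₀, g ∈ G`,
`∫_H |β(g₀gh) − β(gh)| dμ_H(h) ≤ ∫_G |f(g₀x⁻¹) − f(x⁻¹)| dμ_r(x)`. -/
theorem stmt_4
    {G : Type*} [Group G] [TopologicalSpace G] [IsTopologicalGroup G]
    [LocallyCompactSpace G] [SecondCountableTopology G] [T2Space G]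
    [MeasurableSpace G] [BorelSpace G]
    (H : Subgroup G) (hHclosed : IsClosed (H : Set G))
    (μH : Measure H) [μH.IsHaarMeasure]
    (μr : Measure G) [IsFiniteMeasureOnCompacts μr] [μr.IsMulRightInvariant]
    [μr.IsOpenPosMeasure]
    (β₀ : G → ℝ) (hβ₀_meas : Measurable β₀) (hβ₀_nonneg : ∀ g, 0 ≤ β₀ g)
    (hβ₀_int : ∀ x : G, ∫ h : H, β₀ (x * (h : G)) ∂μH = 1)
    (f : G → ℝ) (hf_cont : Continuous f) (hf_supp : HasCompactSupport f)
    (hf_nonneg : ∀ x, 0 ≤ f x) (hf_int : ∫ x, f x⁻¹ ∂μr = 1)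
    (β : G → ℝ) (hβ : ∀ g : G, β g = ∫ x, f (g * x⁻¹) * β₀ x ∂μr) :
    (∀ g : G, ∫ h : H, β (g * (h : G)) ∂μH = 1) ∧
    (∀ g₀ g : G, ∫ h : H, |β (g₀ * g * (h : G)) - β (g * (h : G))| ∂μH
      ≤ ∫ x, |f (g₀ * x⁻¹) - f x⁻¹| ∂μr) :=
  stmt_4_general H hHclosed μH μr β₀ hβ₀_meas hβ₀_nonneg hβ₀_int f hf_cont hf_supp hf_int β hβ
end

section
/- Let u : ℂ → ℂ be Lebesgue measurable and suppose that u((z + w)/2) = (u(z) + u(w))/2 for Lebesgue-almost every pair (z, w) ∈ ℂ × ℂ. Then there exist an ℝ-linear map T : ℂ → ℂ and a constant c ∈ ℂ such that u(z) = T(z) + c for Lebesgue-almost every z ∈ ℂ. -/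
/-!
For each `a`, comparing the midpoint identity at `(z + a, w)` and at `(z, w + a)`, which share a
midpoint, shows that `u (z + a) - u z = u (w + a) - u w` for almost every `(z, w)`; by Fubini the
increment `w ↦ u (w + a) - u w` is therefore almost everywhere equal to a constant `D a`. Averaging
the increment over a ball picks out `D a` in a way that is measurable in `a`, and `D` is additive,
so it is a measurable, hence continuous, hence `ℝ`-linear map. Finally, Fubini once more yields a
point `w₀` with `u (w₀ + a) = u w₀ + D a` for almost every `a`, which is the claim with
`c = u w₀ - D w₀`.
-/

open MeasureTheory Metric

lemma exists_ae_eq_const_of_ae_prod_eq {α β : Type*} [MeasurableSpace α] {μ : Measure α}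
    [SFinite μ] [NeZero μ] {f : α → β} (h : ∀ᵐ p ∂μ.prod μ, f p.1 = f p.2) :
    ∃ c, ∀ᵐ x ∂μ, f x = c := by
  obtain ⟨x₀, hx₀⟩ := (Measure.ae_ae_of_ae_prod h).exists
  exact ⟨f x₀, hx₀.mono fun _ hx ↦ hx.symm⟩

lemma ae_prod_add_sub_eq_of_ae_midpoint {V E : Type*} [AddCommGroup V] [Module ℝ V]
    [MeasurableSpace V] [MeasurableAdd V] {μ : Measure V} [SFinite μ] [μ.IsAddRightInvariant]
    [AddCommGroup E] [Module ℝ E] {u : V → E}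
    (h : ∀ᵐ p ∂μ.prod μ, u (midpoint ℝ p.1 p.2) = midpoint ℝ (u p.1) (u p.2)) (a : V) :
    ∀ᵐ p ∂μ.prod μ, u (p.1 + a) - u p.1 = u (p.2 + a) - u p.2 := by
  have h₁ : ∀ᵐ p ∂μ.prod μ, u (midpoint ℝ (p.1 + a) p.2) = midpoint ℝ (u (p.1 + a)) (u p.2) :=
    ((measurePreserving_add_right μ a).prod (.id μ)).quasiMeasurePreserving.ae h
  have h₂ : ∀ᵐ p ∂μ.prod μ, u (midpoint ℝ p.1 (p.2 + a)) = midpoint ℝ (u p.1) (u (p.2 + a)) :=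
    ((MeasurePreserving.id μ).prod (measurePreserving_add_right μ a)).quasiMeasurePreserving.ae h
  filter_upwards [h₁, h₂] with p h₁ h₂
  have hmid : midpoint ℝ (p.1 + a) p.2 = midpoint ℝ p.1 (p.2 + a) :=
    (midpoint_eq_midpoint_iff_vsub_eq_vsub ℝ).2 (by simp)
  have hsum := congrArg (fun x ↦ x + x) (h₁.symm.trans ((congrArg u hmid).trans h₂))
  simp only [midpoint_add_self] at hsum
  rw [sub_eq_sub_iff_add_eq_add, hsum]
  abel

section MidpointAffine

variable {V E : Type*}
  [NormedAddCommGroup V] [NormedSpace ℝ V] [MeasurableSpace V] [BorelSpace V]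
  [FiniteDimensional ℝ V] {μ : Measure V} [μ.IsAddHaarMeasure]
  [NormedAddCommGroup E] [NormedSpace ℝ E] {u : V → E}

variable (μ u) in
noncomputable def translationIncrement (a : V) : E :=
  ⨍ w in ball 0 1, (u (w + a) - u w) ∂μ

lemma ae_add_sub_eq_translationIncrement [CompleteSpace E]
    (h : ∀ᵐ p ∂μ.prod μ, u (midpoint ℝ p.1 p.2) = midpoint ℝ (u p.1) (u p.2)) (a : V) :
    ∀ᵐ w ∂μ, u (w + a) - u w = translationIncrement μ u a := by
  obtain ⟨c, hc⟩ := exists_ae_eq_const_of_ae_prod_eq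
    (f := fun w ↦ u (w + a) - u w) (ae_prod_add_sub_eq_of_ae_midpoint h a)
  have hball : μ (ball 0 1) ≠ 0 := (measure_ball_pos μ 0 one_pos).ne'
  have : translationIncrement μ u a = c := by
    rw [translationIncrement, average_congr (ae_restrict_of_ae hc),
      setAverage_const hball measure_ball_lt_top.ne]
  rwa [this]

lemma translationIncrement_add [CompleteSpace E]
    (h : ∀ᵐ p ∂μ.prod μ, u (midpoint ℝ p.1 p.2) = midpoint ℝ (u p.1) (u p.2)) (a b : V) :
    translationIncrement μ u (a + b) =
      translationIncrement μ u a + translationIncrement μ u b := by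
  have ha : ∀ᵐ w ∂μ, u (w + b + a) - u (w + b) = translationIncrement μ u a :=
    (measurePreserving_add_right μ b).quasiMeasurePreserving.ae
      (ae_add_sub_eq_translationIncrement h a)
  obtain ⟨w, hab, ha, hb⟩ := ((ae_add_sub_eq_translationIncrement h (a + b)).and
    (ha.and (ae_add_sub_eq_translationIncrement h b))).exists
  rw [← hab, ← ha, ← hb, add_right_comm, add_assoc]
  abel

variable [MeasurableSpace E] [BorelSpace E] [SecondCountableTopology E]

lemma measurable_translationIncrement (hu : Measurable u) :
    Measurable (translationIncrement μ u) := by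
  have hF : StronglyMeasurable fun p : V × V ↦ u (p.2 + p.1) - u p.2 :=
    ((hu.comp (measurable_snd.add measurable_fst)).sub (hu.comp measurable_snd)).stronglyMeasurable
  unfold translationIncrement
  simp_rw [average_eq]
  exact (hF.integral_prod_right' (ν := μ.restrict (ball 0 1))).measurable.const_smul _

theorem exists_continuousLinearMap_ae_eq_add_const_of_ae_midpoint [CompleteSpace E]
    (hu : Measurable u)
    (h : ∀ᵐ p ∂μ.prod μ, u (midpoint ℝ p.1 p.2) = midpoint ℝ (u p.1) (u p.2)) :
    ∃ (T : V →L[ℝ] E) (c : E), ∀ᵐ z ∂μ, u z = T z + c := by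
  let D : V →+ E := AddMonoidHom.mk' (translationIncrement μ u) (translationIncrement_add h)
  have hD : Measurable D := measurable_translationIncrement hu
  let T := D.toRealLinearMap (Measure.AddMonoidHom.continuous_of_measurable D hD)
  have hmeas : MeasurableSet {p : V × V | u (p.2 + p.1) = u p.2 + D p.1} :=
    measurableSet_eq_fun (hu.comp (measurable_snd.add measurable_fst))
      ((hu.comp measurable_snd).add (hD.comp measurable_fst))
  have hae : ∀ᵐ a ∂μ, ∀ᵐ w ∂μ, u (w + a) = u w + D a :=
    .of_forall fun a ↦ (ae_add_sub_eq_translationIncrement h a).mono fun _ hw ↦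
      sub_eq_iff_eq_add'.1 hw
  obtain ⟨w₀, hw₀⟩ := ((Measure.ae_ae_comm hmeas).1 hae).exists
  refine ⟨T, u w₀ - D w₀, ?_⟩
  filter_upwards [(measurePreserving_add_right μ (-w₀)).quasiMeasurePreserving.ae hw₀]
    with z hz
  rw [add_comm z, add_neg_cancel_left, map_add, map_neg] at hz
  simp only [T, AddMonoidHom.coe_toRealLinearMap, hz]
  abel

end MidpointAffine

lemma Complex.midpoint_real_eq (z w : ℂ) : midpoint ℝ z w = (z + w) / 2 := by
  rw [midpoint_eq_smul_add, Complex.real_smul, invOf_eq_inv, div_eq_inv_mul]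
  push_cast
  rfl

/-- Let `u : ℂ → ℂ` be Lebesgue measurable with
`u((z + w)/2) = (u(z) + u(w))/2` for Lebesgue-almost every pair `(z, w) ∈ ℂ × ℂ`.
Then there exist an `ℝ`-linear map `T : ℂ → ℂ` and a constant `c ∈ ℂ` such that
`u(z) = T(z) + c` for Lebesgue-almost every `z ∈ ℂ`. -/
theorem stmt_10 (u : ℂ → ℂ) (hu : Measurable u)
    (h : ∀ᵐ p : ℂ × ℂ ∂volume, u ((p.1 + p.2) / 2) = (u p.1 + u p.2) / 2) :
    ∃ (T : ℂ →ₗ[ℝ] ℂ) (c : ℂ), ∀ᵐ z : ℂ ∂volume, u z = T z + c := by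
  simp_rw [Measure.volume_eq_prod, ← Complex.midpoint_real_eq] at h
  obtain ⟨T, c, hT⟩ := exists_continuousLinearMap_ae_eq_add_const_of_ae_midpoint hu h
  exact ⟨T.toLinearMap, c, hT⟩
end

section
/- Let T : ℂ → ℂ be an ℝ-linear map and suppose there exist c ∈ ℂ and r > 0 such that T maps the unit circle {z ∈ ℂ : |z| = 1} onto the circle {w ∈ ℂ : |w − c| = r}. Then c = 0 and there exists λ ∈ ℂ with |λ| = r such that either T(z) = λ·z for all z ∈ ℂ, or T(z) = λ·conj(z) for all z ∈ ℂ. -/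
/-!
Since `T` is odd, the image circle is symmetric about the origin, which forces its centre to be
`0`. Then `‖T z‖ = r ‖z‖` for all `z`, so `r⁻¹ • T` is a real-linear isometry of `ℂ`, hence a
rotation or a rotation composed with conjugation.
-/

open Metric ComplexConjugate

theorem center_eq_zero_of_forall_neg_mem_sphere {E : Type*} [NormedAddCommGroup E]
    [NormedSpace ℝ E] {c : E} {r : ℝ} (hr : 0 ≤ r) (h : ∀ w ∈ sphere c r, -w ∈ sphere c r) :
    c = 0 := by
  by_contra hc
  have hc_pos : 0 < ‖c‖ := norm_pos_iff.mpr hc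
  -- the point of the sphere farthest from the origin, on the ray through `c`
  set w := c + (r / ‖c‖) • c
  have hw : w ∈ sphere c r := by
    rw [mem_sphere_iff_norm, add_sub_cancel_left, norm_smul, Real.norm_eq_abs,
      abs_of_nonneg (div_nonneg hr hc_pos.le), div_mul_cancel₀ _ hc_pos.ne']
  have hneg := h w hw
  have hsub : -w - c = -((2 + r / ‖c‖) • c) := by simp only [w]; module
  rw [mem_sphere_iff_norm, hsub, norm_neg, norm_smul, Real.norm_eq_abs,
    abs_of_pos (by positivity), add_mul, div_mul_cancel₀ _ hc_pos.ne'] at hneg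
  linarith

theorem LinearMap.norm_apply_eq_mul_norm_of_norm_eq_on_sphere {E F : Type*}
    [NormedAddCommGroup E] [NormedSpace ℝ E] [NormedAddCommGroup F] [NormedSpace ℝ F]
    (T : E →ₗ[ℝ] F) {r : ℝ} (h : ∀ z ∈ sphere (0 : E) 1, ‖T z‖ = r) (z : E) :
    ‖T z‖ = r * ‖z‖ := by
  rcases eq_or_ne z 0 with rfl | hz
  · simp
  have hz_pos : 0 < ‖z‖ := norm_pos_iff.mpr hz
  have hunit : ‖z‖⁻¹ • z ∈ sphere (0 : E) 1 := by
    rw [mem_sphere_zero_iff_norm, norm_smul, norm_inv, norm_norm, inv_mul_cancel₀ hz_pos.ne']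
  have := h _ hunit
  rw [map_smul, norm_smul, norm_inv, norm_norm, inv_mul_eq_iff_eq_mul₀ hz_pos.ne'] at this
  rw [this, mul_comm]

theorem exists_eq_mul_or_eq_mul_conj_of_norm_apply_eq_mul_norm (T : ℂ →ₗ[ℝ] ℂ) {r : ℝ}
    (hr : 0 < r) (h : ∀ z, ‖T z‖ = r * ‖z‖) :
    ∃ l : ℂ, ‖l‖ = r ∧ ((∀ z, T z = l * z) ∨ ∀ z, T z = l * conj z) := by
  let f : ℂ →ₗᵢ[ℝ] ℂ :=
    { r⁻¹ • T with
      norm_map' := fun z => by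
        simp [h, abs_of_pos hr, hr.ne'] }
  have hT : ∀ z, T z = r * f.toLinearIsometryEquiv rfl z := fun z => by
    simp [f, ← Complex.real_smul, smul_smul, hr.ne']
  obtain ⟨a, ha | ha⟩ := linear_isometry_complex (f.toLinearIsometryEquiv rfl)
  · refine ⟨r * a, by simp [abs_of_pos hr, Circle.norm_coe], Or.inl fun z => ?_⟩
    rw [hT, ha, rotation_apply, mul_assoc]
  · refine ⟨r * a, by simp [abs_of_pos hr, Circle.norm_coe], Or.inr fun z => ?_⟩
    rw [hT, ha, LinearIsometryEquiv.trans_apply, rotation_apply, Complex.conjLIE_apply,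
      mul_assoc]

/-- Let `T : ℂ → ℂ` be an `ℝ`-linear map mapping the unit circle onto
the circle `{w : |w − c| = r}` for some `c ∈ ℂ` and `r > 0`.  Then `c = 0` and there is
`λ ∈ ℂ` with `|λ| = r` such that either `T(z) = λ·z` for all `z`, or `T(z) = λ·conj(z)`
for all `z`. -/
theorem stmt_11 (T : ℂ →ₗ[ℝ] ℂ) (c : ℂ) (r : ℝ) (hr : 0 < r)
    (h : T '' {z : ℂ | ‖z‖ = 1} = {w : ℂ | ‖w - c‖ = r}) :
    c = 0 ∧ ∃ l : ℂ, ‖l‖ = r ∧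
      ((∀ z : ℂ, T z = l * z) ∨ ∀ z : ℂ, T z = l * (starRingEnd ℂ) z) := by
  have himage : T '' sphere 0 1 = sphere c r := by
    convert h using 1
    · ext; simp
    · ext; simp [mem_sphere_iff_norm]
  have hc : c = 0 := by
    refine center_eq_zero_of_forall_neg_mem_sphere hr.le fun w hw => ?_
    obtain ⟨z, hz, rfl⟩ := himage ▸ hw
    exact himage ▸ ⟨-z, by simpa using hz, map_neg T z⟩
  subst hc
  have hsphere : ∀ z ∈ sphere (0 : ℂ) 1, ‖T z‖ = r := fun z hz => by
    simpa using himage.subset ⟨z, hz, rfl⟩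
  exact ⟨rfl, exists_eq_mul_or_eq_mul_conj_of_norm_apply_eq_mul_norm T hr
    (T.norm_apply_eq_mul_norm_of_norm_eq_on_sphere hsphere)⟩
end

section
/- Let μ be a Borel probability measure on G in the same measure class as a left Haar measure of G, let ν be a Borel probability measure on H⧸Q, and let ν₂ be the pushforward of the product measure μ ⊗ ν ⊗ ν under the map G × (H⧸Q)² → (G⧸Q)², (g, x, y) ↦ (g·ι(x), g·ι(y)), where ι : H⧸Q → G⧸Q sends hQ to hQ. Assume that every Borel set B ⊆ (H⧸Q) × (H⧸Q) with h·B = B for every h ∈ H (diagonal action) satisfies (ν ⊗ ν)(B) = 0 or (ν ⊗ ν)(((H⧸Q)×(H⧸Q)) ∖ B) = 0. Then every Borel set A ⊆ (G⧸Q) × (G⧸Q) with g·A = A for every g ∈ G (diagonal action) satisfies ν₂(A) = 0 or ν₂(((G⧸Q)×(G⧸Q)) ∖ A) = 0. -/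
open MeasureTheory Set
open scoped Pointwise

/-!
A `G`-invariant set `A` pulls back under `(g, x, y) ↦ (g • ι x, g • ι y)` to `G × S`, where
`S = (ι × ι)⁻¹ A` is `H`-invariant because `ι` is `H`-equivariant. Hence
`ν₂ A = μ G · (ν ⊗ ν) S` and `ν₂ Aᶜ = μ G · (ν ⊗ ν) Sᶜ`, and ergodicity of `ν ⊗ ν` applies to `S`.
-/

theorem preimage_smul_comp_eq_snd_preimage {G α β : Type*} [Group G] [MulAction G α]
    {A : Set α} (hA : ∀ g : G, g • A = A) (f : β → α) :
    (fun p : G × β => p.1 • f p.2) ⁻¹' A = Prod.snd ⁻¹' (f ⁻¹' A) := by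
  ext ⟨g, b⟩
  exact MulAction.smul_mem_of_set_mem_fixedBy (hA g)

namespace MeasureTheory.Measure

variable {α β γ : Type*} [MeasurableSpace α] [MeasurableSpace β] [MeasurableSpace γ]
  {μ : Measure α} {ν : Measure β} [SFinite ν] {T : α × β → γ} {A : Set γ} {S : Set β}

theorem map_prod_apply_eq_zero_of_preimage_eq (hA : MeasurableSet A)
    (hTA : T ⁻¹' A = Prod.snd ⁻¹' S) (hS : ν S = 0) : (μ.prod ν).map T A = 0 := by
  by_cases hT : AEMeasurable T (μ.prod ν)
  · rw [map_apply_of_aemeasurable hT hA, hTA, ← univ_prod, prod_prod, hS, mul_zero]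
  · simp [map_of_not_aemeasurable hT]

theorem map_prod_null_or_conull_of_preimage_eq (hA : MeasurableSet A)
    (hTA : T ⁻¹' A = Prod.snd ⁻¹' S) (hS : ν S = 0 ∨ ν Sᶜ = 0) :
    (μ.prod ν).map T A = 0 ∨ (μ.prod ν).map T Aᶜ = 0 :=
  hS.imp (map_prod_apply_eq_zero_of_preimage_eq hA hTA)
    (map_prod_apply_eq_zero_of_preimage_eq hA.compl (by rw [preimage_compl, hTA, preimage_compl]))

end MeasureTheory.Measure

namespace QuotientGroup

variable {G : Type*} [Group G] {H Q : Subgroup G} {ι : H ⧸ Q.subgroupOf H → G ⧸ Q}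

theorem measurable_of_forall_mk_eq [MeasurableSpace G]
    (hι : ∀ h : H, ι (mk h) = mk (h : G)) : Measurable ι := by
  rw [measurable_from_quotient]
  have hcomp : ι ∘ (mk : H → H ⧸ Q.subgroupOf H) = fun h : H => (mk (h : G) : G ⧸ Q) :=
    funext hι
  rw [hcomp]
  exact measurable_coe.comp measurable_subtype_coe

theorem map_smul_of_forall_mk_eq (hι : ∀ h : H, ι (mk h) = mk (h : G))
    (h : H) (x : H ⧸ Q.subgroupOf H) : ι (h • x) = (h : G) • ι x := by
  induction x using QuotientGroup.induction_on with
  | H h' => rw [MulAction.Quotient.smul_mk, hι, hι, MulAction.Quotient.smul_mk]; rfl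

end QuotientGroup

theorem stmt_12_general
    {G : Type*} [Group G] [MeasurableSpace G]
    (H Q : Subgroup G) (μ : Measure G)
    (ν : Measure (H ⧸ Q.subgroupOf H)) [IsProbabilityMeasure ν]
    (ι : (H ⧸ Q.subgroupOf H) → G ⧸ Q)
    (hι : ∀ h : H, ι (QuotientGroup.mk h) = QuotientGroup.mk (h : G))
    (ν₂ : Measure ((G ⧸ Q) × (G ⧸ Q)))
    (hν₂ : ν₂ = Measure.map
      (fun p : G × ((H ⧸ Q.subgroupOf H) × (H ⧸ Q.subgroupOf H)) =>
        (p.1 • ι p.2.1, p.1 • ι p.2.2))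
      (μ.prod (ν.prod ν)))
    (herg : ∀ B : Set ((H ⧸ Q.subgroupOf H) × (H ⧸ Q.subgroupOf H)),
      MeasurableSet B →
      (∀ h : H, (fun p : (H ⧸ Q.subgroupOf H) × (H ⧸ Q.subgroupOf H) =>
        (h • p.1, h • p.2)) '' B = B) →
      (ν.prod ν) B = 0 ∨ (ν.prod ν) Bᶜ = 0) :
    ∀ A : Set ((G ⧸ Q) × (G ⧸ Q)), MeasurableSet A →
      (∀ g : G, (fun p : (G ⧸ Q) × (G ⧸ Q) => (g • p.1, g • p.2)) '' A = A) →
      ν₂ A = 0 ∨ ν₂ Aᶜ = 0 := by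
  intro A hA hAinv
  replace hAinv : ∀ g : G, g • A = A := hAinv
  let ι₂ : (H ⧸ Q.subgroupOf H) × (H ⧸ Q.subgroupOf H) →ₑ[(H.subtype : H → G)]
      (G ⧸ Q) × (G ⧸ Q) :=
    { toFun := Prod.map ι ι
      map_smul' := fun h x => by
        simp [Prod.map, QuotientGroup.map_smul_of_forall_mk_eq hι] }
  have hι₂ : Measurable ι₂ :=
    (QuotientGroup.measurable_of_forall_mk_eq hι).prodMap
      (QuotientGroup.measurable_of_forall_mk_eq hι)
  have hpreimage_inv : ∀ h : H, h • (ι₂ ⁻¹' A) = ι₂ ⁻¹' A := fun h => by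
    rw [← Group.preimage_smul_setₛₗ, hAinv]
  subst hν₂
  exact Measure.map_prod_null_or_conull_of_preimage_eq hA
    (preimage_smul_comp_eq_snd_preimage hAinv ι₂) (herg _ (hι₂ hA) hpreimage_inv)

/-- Let `G` be a locally compact second countable Hausdorff group with
closed subgroups `Q ≤ H ≤ G`, `μ` a Borel probability measure on `G` in the same measure
class as a left Haar measure, `ν` a Borel probability measure on `H⧸Q`, and `ν₂` the
pushforward of `μ ⊗ ν ⊗ ν` under `(g, x, y) ↦ (g·ι x, g·ι y)`, where `ι : H⧸Q → G⧸Q` sends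
`hQ` to `hQ`.  If every Borel set `B ⊆ (H⧸Q)²` invariant under the diagonal `H`-action is
`ν ⊗ ν`-null or conull, then every Borel set `A ⊆ (G⧸Q)²` invariant under the diagonal
`G`-action is `ν₂`-null or conull. -/
theorem stmt_12
    {G : Type*} [Group G] [TopologicalSpace G] [IsTopologicalGroup G]
    [LocallyCompactSpace G] [SecondCountableTopology G] [T2Space G]
    [MeasurableSpace G] [BorelSpace G]
    (H Q : Subgroup G) (hQH : Q ≤ H)
    (hHclosed : IsClosed (H : Set G)) (hQclosed : IsClosed (Q : Set G))
    (μ : Measure G) [IsProbabilityMeasure μ]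
    (haar : Measure G) [haar.IsHaarMeasure]
    (hclass : μ ≪ haar ∧ haar ≪ μ)
    (ν : Measure (H ⧸ Q.subgroupOf H)) [IsProbabilityMeasure ν]
    (ι : (H ⧸ Q.subgroupOf H) → G ⧸ Q)
    (hι : ∀ h : H, ι (QuotientGroup.mk h) = QuotientGroup.mk (h : G))
    (ν₂ : Measure ((G ⧸ Q) × (G ⧸ Q)))
    (hν₂ : ν₂ = Measure.map
      (fun p : G × ((H ⧸ Q.subgroupOf H) × (H ⧸ Q.subgroupOf H)) =>
        (p.1 • ι p.2.1, p.1 • ι p.2.2))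
      (μ.prod (ν.prod ν)))
    (herg : ∀ B : Set ((H ⧸ Q.subgroupOf H) × (H ⧸ Q.subgroupOf H)),
      MeasurableSet B →
      (∀ h : H, (fun p : (H ⧸ Q.subgroupOf H) × (H ⧸ Q.subgroupOf H) =>
        (h • p.1, h • p.2)) '' B = B) →
      (ν.prod ν) B = 0 ∨ (ν.prod ν) Bᶜ = 0) :
    ∀ A : Set ((G ⧸ Q) × (G ⧸ Q)), MeasurableSet A →
      (∀ g : G, (fun p : (G ⧸ Q) × (G ⧸ Q) => (g • p.1, g • p.2)) '' A = A) →
      ν₂ A = 0 ∨ ν₂ Aᶜ = 0 :=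
  stmt_12_general H Q μ ν ι hι ν₂ hν₂ herg
end
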